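/- In the lattice P (m=3, n=9), the composite w = s_{126} s_{346} s_{589} s_{346} s_{126} s_{67} of reflections (where s_{ij} is the reflection in e_i - e_j and s_{ijk} the reflection in e_0 - e_i - e_j - e_k) acts on P as the translation T_{α} with α = e_6 - e_7: w(L) = L + ⟨δ,L⟩ α - (⟨δ,L⟩ + ⟨L,α⟩) δ for all L ∈ P, where δ = 3e_0 - Σ_{i=1}^9 e_i. -/

import Mathlib

def ee (i : ℕ) : ℕ → ℤ := fun j => if j = i then 1 else 0

def B (x y : ℕ → ℤ) : ℤ := -(x 0 * y 0) + ∑ i ∈ Finset.Icc 1 9, x i * y i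

/-- Reflection in a root `β` (with `⟨β,β⟩ = 2`): `s_β(L) = L - ⟨β,L⟩ β`. -/
def reflE (β L : ℕ → ℤ) : ℕ → ℤ := L - B β L • β

/-- The root `e_i - e_j`. -/
def r2 (i j : ℕ) : ℕ → ℤ := ee i - ee j

/-- The root `e_0 - e_i - e_j - e_k`. -/
def r3 (i j k : ℕ) : ℕ → ℤ := ee 0 - ee i - ee j - ee k

def δδ : ℕ → ℤ := 3 • ee 0 - ∑ i ∈ Finset.Icc 1 9, ee i

/-!
Since `s_β s_γ s_β = s_{s_β γ}`, the first five reflections collapse to the single reflection in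
`γ = s₁₂₆ s₃₄₆ (e₀ - e₅ - e₈ - e₉) = r₁₂₆ + r₃₄₆ + r₅₈₉ = δ - α`.
For any `δ` orthogonal to a root `α`, the product `s_{δ-α} s_α` is the
Eichler–Siegel transvection `L ↦ L + ⟨δ,L⟩ α - (⟨δ,L⟩ + ⟨L,α⟩) δ`.
-/

section Form

variable (x y z : ℕ → ℤ) (c : ℤ)

lemma B_comm : B x y = B y x := by
  simp only [B, mul_comm]

lemma B_sub_right : B x (y - z) = B x y - B x z := by
  simp only [B, Pi.sub_apply, mul_sub, Finset.sum_sub_distrib]; ring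

lemma B_smul_right : B x (c • y) = c * B x y := by
  simp only [B, Pi.smul_apply, smul_eq_mul, mul_add, Finset.mul_sum, mul_left_comm c, mul_neg]

lemma B_sub_left : B (x - y) z = B x z - B y z := by
  rw [B_comm, B_sub_right, B_comm z, B_comm z]

lemma B_smul_left : B (c • x) y = c * B x y := by
  rw [B_comm, B_smul_right, B_comm]

end Form

section Reflection

variable {α β γ δ : ℕ → ℤ}

lemma reflE_of_B_eq {c : ℤ} (L : ℕ → ℤ) (h : B β L = c) : reflE β L = L - c • β := by
  rw [reflE, h]

lemma reflE_reflE (hβ : B β β = 2) (L : ℕ → ℤ) : reflE β (reflE β L) = L := by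
  simp only [reflE, B_sub_right, B_smul_right, hβ]
  module

lemma B_reflE_left (L M : ℕ → ℤ) : B (reflE β L) M = B L (reflE β M) := by
  simp only [reflE, B_sub_left, B_sub_right, B_smul_left, B_smul_right, B_comm L β]
  ring

lemma reflE_reflE_reflE (hβ : B β β = 2) (L : ℕ → ℤ) :
    reflE β (reflE γ (reflE β L)) = reflE (reflE β γ) L := by
  have hlin : ∀ M, reflE β (reflE γ M) = reflE β M - B γ M • reflE β γ := by
    intro M
    simp only [reflE, B_sub_right, B_smul_right]
    module
  rw [hlin, reflE_reflE hβ, reflE_of_B_eq L (B_reflE_left γ L)]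

lemma reflE_sub_reflE (hδα : B δ α = 0) (hα : B α α = 2) (L : ℕ → ℤ) :
    reflE (δ - α) (reflE α L) = L + B δ L • α - (B δ L + B L α) • δ := by
  have hcoef : B (δ - α) (reflE α L) = B δ L + B L α := by
    simp only [reflE, B_sub_left, B_sub_right, B_smul_right, hδα, hα, B_comm L α]
    ring
  rw [reflE_of_B_eq _ hcoef, reflE, B_comm α L]
  module

end Reflection

lemma reflE_r126_reflE_r346_r589 :
    reflE (r3 1 2 6) (reflE (r3 3 4 6) (r3 5 8 9)) = δδ - r2 6 7 := by
  rw [reflE_of_B_eq _ (by decide : B (r3 3 4 6) (r3 5 8 9) = -1),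
    reflE_of_B_eq _ (by decide : B (r3 1 2 6) (r3 5 8 9 - (-1) • r3 3 4 6) = -1)]
  simp only [r3, r2, δδ, Finset.sum_Icc_succ_top (show 1 ≤ _ by norm_num), Finset.Icc_self,
    Finset.sum_singleton]
  module

/-- The composite `w = s₁₂₆ s₃₄₆ s₅₈₉ s₃₄₆ s₁₂₆ s₆₇` acts on `P` as the
translation `T_α` with `α = e₆ - e₇`. -/
theorem stmt12 :
    ∀ L : ℕ → ℤ,
      reflE (r3 1 2 6) (reflE (r3 3 4 6) (reflE (r3 5 8 9)
        (reflE (r3 3 4 6) (reflE (r3 1 2 6) (reflE (r2 6 7) L))))) =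
      L + B δδ L • r2 6 7 - (B δδ L + B L (r2 6 7)) • δδ := by
  intro L
  rw [reflE_reflE_reflE (by decide), reflE_reflE_reflE (by decide), reflE_r126_reflE_r346_r589]
  exact reflE_sub_reflE (by decide) (by decide) L
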